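/- arXiv:1102.2835 — 2 statements merged into one kernel-verified Lean document; each statement's English description precedes it below -/
import Mathlib

section
/- The space of sections of an integrable multi-Dirac structure D of degree n forms a Gerstenhaber algebra: the multi-Courant bracket is graded anti-commutative ([[(Γ,Σ),(Γ',Σ')]] = −(-1)^{(r-1)(s-1)}[[(Γ',Σ'),(Γ,Σ)]]), satisfies the graded Leibniz identity with respect to the wedge product ([[(Γ,Σ),(Γ',Σ')∧(Γ'',Σ'')]] = [[(Γ,Σ),(Γ',Σ')]]∧(Γ'',Σ'') + (-1)^{(r-1)s}(Γ',Σ')∧[[(Γ,Σ),(Γ'',Σ'')]]), and satisfies the graded Jacobi identity. -/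
noncomputable section

/-- An abstract model of the calculus of multivector fields and differential
forms on a smooth manifold `Z`:  `A` plays the role of the ring of smooth
functions `C^∞(Z)`, `X` the space of (inhomogeneous) multivector fields, and
`F` the space of (inhomogeneous) differential forms.  The submodules `MV k`
and `Fm k` are the multivector fields and forms of pure degree `k`; `wedge`
is the exterior product of multivector fields, `sch` the Schouten–Nijenhuis
bracket, `iota` the contraction (interior product) of a multivector field
with a form (for decomposable `Γ = X₁ ∧ ⋯ ∧ X_k`,
`iota Γ α = i_{X_k} ⋯ i_{X_1} α`), and `d` the exterior derivative. -/
structure MultiCalc (A X F : Type) [CommRing A] [Algebra ℝ A]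
    [AddCommGroup X] [AddCommGroup F] [Module ℝ X] [Module ℝ F]
    [Module A X] [Module A F] [IsScalarTower ℝ A X] [IsScalarTower ℝ A F] where
  MV : ℕ → Submodule A X
  Fm : ℕ → Submodule A F
  wedge : X → X → X
  sch : X → X → X
  iota : X → F → F
  d : F → F
  wedge_add_left : ∀ a b c, wedge (a + b) c = wedge a c + wedge b c
  wedge_add_right : ∀ a b c, wedge a (b + c) = wedge a b + wedge a c
  wedge_smul_left : ∀ (f : A) a b, wedge (f • a) b = f • wedge a b
  wedge_smul_right : ∀ (f : A) a b, wedge a (f • b) = f • wedge a b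
  iota_add_left : ∀ a b α, iota (a + b) α = iota a α + iota b α
  iota_add_right : ∀ a α β, iota a (α + β) = iota a α + iota a β
  iota_smul_left : ∀ (f : A) a α, iota (f • a) α = f • iota a α
  iota_smul_right : ∀ (f : A) a α, iota a (f • α) = f • iota a α
  sch_add_left : ∀ a b c, sch (a + b) c = sch a c + sch b c
  sch_add_right : ∀ a b c, sch a (b + c) = sch a b + sch a c
  sch_smul_left : ∀ (c : ℝ) a b, sch (c • a) b = c • sch a b
  sch_smul_right : ∀ (c : ℝ) a b, sch a (c • b) = c • sch a b
  d_add : ∀ α β, d (α + β) = d α + d β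
  d_smul : ∀ (c : ℝ) α, d (c • α) = c • d α
  d_d : ∀ α, d (d α) = 0
  wedge_mem : ∀ {r s : ℕ} {a b}, a ∈ MV r → b ∈ MV s → wedge a b ∈ MV (r + s)
  sch_mem : ∀ {r s : ℕ} {a b}, a ∈ MV r → b ∈ MV s → sch a b ∈ MV (r + s - 1)
  iota_mem : ∀ {r k : ℕ} {a α}, a ∈ MV r → α ∈ Fm k → iota a α ∈ Fm (k - r)
  iota_zero_of_lt : ∀ {r k : ℕ} {a α}, a ∈ MV r → α ∈ Fm k → k < r → iota a α = 0
  d_mem : ∀ {k : ℕ} {α}, α ∈ Fm k → d α ∈ Fm (k + 1)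
  /-- `i_{Γ ∧ Γ'} = i_{Γ'} ∘ i_Γ` -/
  iota_wedge : ∀ {r s : ℕ} {a b}, a ∈ MV r → b ∈ MV s →
    ∀ α, iota (wedge a b) α = iota b (iota a α)
  /-- graded commutativity of contractions -/
  iota_comm : ∀ {r s : ℕ} {a b}, a ∈ MV r → b ∈ MV s →
    ∀ α, iota a (iota b α) = ((-1:ℝ)^(r*s)) • iota b (iota a α)
  /-- the Koszul identity `i_{[Γ,Γ']} α = (-1)^{(k-1)l} £_Γ i_{Γ'} α − i_{Γ'} £_Γ α`,
  written out using `£_Γ α = d i_Γ α − (-1)^k i_Γ dα`. -/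
  koszul : ∀ {k l : ℕ} {a b}, a ∈ MV k → b ∈ MV l → ∀ α,
    iota (sch a b) α =
      ((-1:ℝ)^((k-1)*l)) •
        (d (iota a (iota b α)) - ((-1:ℝ)^k) • iota a (d (iota b α)))
      - iota b (d (iota a α) - ((-1:ℝ)^k) • iota a (d α))
  /-- graded anticommutativity of the Schouten–Nijenhuis bracket -/
  sch_comm : ∀ {k l : ℕ} {a b}, a ∈ MV k → b ∈ MV l →
    sch a b = -(((-1:ℝ)^((k-1)*(l-1))) • sch b a)
  /-- graded Leibniz rule for the Schouten–Nijenhuis bracket -/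
  sch_leibniz : ∀ {k l m : ℕ} {a b c}, a ∈ MV k → b ∈ MV l → c ∈ MV m →
    sch a (wedge b c) = wedge (sch a b) c + ((-1:ℝ)^((k-1)*l)) • wedge b (sch a c)
  /-- graded Jacobi identity for the Schouten–Nijenhuis bracket -/
  sch_jacobi : ∀ {k l m : ℕ} {a b c}, a ∈ MV k → b ∈ MV l → c ∈ MV m →
    ((-1:ℝ)^((k-1)*(m-1))) • sch a (sch b c)
      + ((-1:ℝ)^((l-1)*(k-1))) • sch b (sch c a)
      + ((-1:ℝ)^((m-1)*(l-1))) • sch c (sch a b) = 0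
  /-- contraction is a nondegenerate pairing of multivector fields with forms -/
  iota_nondeg : ∀ {k r : ℕ} {α}, α ∈ Fm k → 1 ≤ r → r ≤ k →
    (∀ a ∈ MV r, iota a α = 0) → α = 0

namespace MultiCalc

variable {A X F : Type} [CommRing A] [Algebra ℝ A]
  [AddCommGroup X] [AddCommGroup F] [Module ℝ X] [Module ℝ F]
  [Module A X] [Module A F] [IsScalarTower ℝ A X] [IsScalarTower ℝ A F]
variable (C : MultiCalc A X F)

/-- generalized Lie derivative along a multivector field of degree `k`:
`£_Γ α = d i_Γ α − (-1)^k i_Γ dα` -/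
def lie (k : ℕ) (a : X) (α : F) : F :=
  C.d (C.iota a α) - ((-1:ℝ)^k) • C.iota a (C.d α)

/-- graded symmetric pairing `⟨⟨·,·⟩⟩₊` on `L_r × L_s` -/
def pairPlus (r s : ℕ) (p q : X × F) : F :=
  (1/2 : ℝ) • (C.iota q.1 p.2 + ((-1:ℝ)^(r*s)) • C.iota p.1 q.2)

/-- graded antisymmetric pairing `⟨⟨·,·⟩⟩₋` on `L_r × L_s` -/
def pairMinus (r s : ℕ) (p q : X × F) : F :=
  (1/2 : ℝ) • (C.iota q.1 p.2 - ((-1:ℝ)^(r*s)) • C.iota p.1 q.2)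

/-- the multi-Courant bracket on sections of `L_r × L_s` -/
def courant (r s : ℕ) (p q : X × F) : X × F :=
  (C.sch p.1 q.1,
    ((-1:ℝ)^((r-1)*s)) • C.lie r p.1 q.2 + ((-1:ℝ)^s) • C.lie s q.1 p.2
      - ((-1:ℝ)^s) • C.d (C.pairPlus r s p q))

/-- the graded wedge product of sections of `L_r × L_s` -/
def wedgeP (r s : ℕ) (p q : X × F) : X × F :=
  (C.wedge p.1 q.1, C.pairPlus r s p q)

/-- `L_r = ⋀^r(TZ) ×_Z ⋀^{n+1-r}(T^*Z)` -/
def Lset (n r : ℕ) : Set (X × F) := {p | p.1 ∈ C.MV r ∧ p.2 ∈ C.Fm (n + 1 - r)}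

/-- the `s`-orthogonal complement of `V ⊆ L_r` with respect to `⟨⟨·,·⟩⟩₋` -/
def orthC (n r : ℕ) (V : Set (X × F)) (s : ℕ) : Set (X × F) :=
  {q ∈ C.Lset n s | ∀ p ∈ V, C.pairMinus r s p q = 0}

/-- a multi-Dirac structure of degree `n`: subbundles `D r ⊆ L_r` that are
maximally isotropic, i.e. `(D r)^{⊥,s} = D s` whenever `r + s ≤ n + 1` -/
structure IsMultiDirac (n : ℕ) (D : ℕ → Set (X × F)) : Prop where
  subset : ∀ r, 1 ≤ r → r ≤ n → D r ⊆ C.Lset n r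
  orth : ∀ r s, 1 ≤ r → 1 ≤ s → r + s ≤ n + 1 → C.orthC n r (D r) s = D s

/-- integrability: sections of `D` are closed under the multi-Courant bracket -/
def Integrable (n : ℕ) (D : ℕ → Set (X × F)) : Prop :=
  ∀ r s, 1 ≤ r → 1 ≤ s → r + s ≤ n + 1 →
    ∀ p ∈ D r, ∀ q ∈ D s, C.courant r s p q ∈ D (r + s - 1)

/-- the integrability tensor `T_D = 2 ⟨⟨·, [[·,·]]⟩⟩₋` -/
def TD (r s t : ℕ) (p q w : X × F) : F :=
  (2:ℝ) • C.pairMinus r (s + t - 1) p (C.courant s t q w)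

/-- the Jacobiator of the multi-Courant bracket -/
def jacobiator (r s t : ℕ) (p q w : X × F) : X × F :=
  C.courant r (s + t - 1) p (C.courant s t q w)
    + ((-1:ℝ)^((t-1)*(r+s))) • C.courant t (r + s - 1) w (C.courant r s p q)
    + ((-1:ℝ)^((r-1)*(s+t))) • C.courant s (t + r - 1) q (C.courant t r w p)

/-- the gauge transformation `Φ_σ (Γ, Σ) = (Γ, Σ + i_Γ σ)` -/
def gauge (σ : F) (p : X × F) : X × F := (p.1, p.2 + C.iota p.1 σ)

/-- the graph `{(Γ, i_Γ Ω)}` of a differential form `Ω` -/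
def graphD (Ω : F) (r : ℕ) : Set (X × F) := {p | p.1 ∈ C.MV r ∧ p.2 = C.iota p.1 Ω}

/-- the multi-Poisson bracket `{Σ, Σ'} = −(-1)^{|Σ|} i_{Γ_{Σ'}} dΣ`, written as a
function of the degree `k = |Σ|`, the form `Σ`, and a multivector field
`Γ_{Σ'}` associated with `Σ'` -/
def pb (k : ℕ) (α : F) (g : X) : F := -(((-1:ℝ)^k) • C.iota g (C.d α))

/-- an `(n-r)`-form `Σ` is admissible if `(Γ_Σ, dΣ) ∈ D_r` for some
`r`-multivector field `Γ_Σ` -/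
def Admissible (n : ℕ) (D : ℕ → Set (X × F)) (r : ℕ) (α : F) : Prop :=
  α ∈ C.Fm (n - r) ∧ ∃ g ∈ C.MV r, (g, C.d α) ∈ D r

/-- the form `Ω_D(v_1, …, v_n) := α_n(v_1, …, v_{n-1})` associated with `D_1`,
for sections `(v_i, α_i)` of `D_1` and `n = m + 1` -/
def OmD (m : ℕ) (p : Fin (m+1) → X × F) : F :=
  (List.ofFn fun i : Fin m => (p i.castSucc).1).foldl
    (fun β v => C.iota v β) (p (Fin.last m)).2

end MultiCalc

/-!
Each identity is checked componentwise. On multivector fields it is the corresponding identity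
of the Schouten–Nijenhuis bracket. On forms one expands the brackets by the Koszul formula and
the Cartan calculus; isotropy of `D`, `i_{Γ'} Σ = (-1)^{rs} i_Γ Σ'`, then brings every iterated
contraction into one normal order. After that the Leibniz rule holds identically, and the form
part of the Jacobiator collapses to the exact form `d T_D`, which vanishes because `D` is
integrable.
-/

namespace MultiCalc

variable {A X F : Type} [CommRing A] [Algebra ℝ A]
  [AddCommGroup X] [AddCommGroup F] [Module ℝ X] [Module ℝ F]
  [Module A X] [Module A F] [IsScalarTower ℝ A X] [IsScalarTower ℝ A F]
variable (C : MultiCalc A X F)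

lemma iota_real_smul (a : X) (c : ℝ) (α : F) : C.iota a (c • α) = c • C.iota a α := by
  rw [← algebraMap_smul A c α, C.iota_smul_right, algebraMap_smul]

lemma iota_sub_right (a : X) (α β : F) : C.iota a (α - β) = C.iota a α - C.iota a β :=
  (AddMonoidHom.mk' (C.iota a) (C.iota_add_right a)).map_sub α β

lemma iota_zero_right (a : X) : C.iota a 0 = 0 :=
  (AddMonoidHom.mk' (C.iota a) (C.iota_add_right a)).map_zero

lemma d_sub (α β : F) : C.d (α - β) = C.d α - C.d β :=
  (AddMonoidHom.mk' C.d C.d_add).map_sub α β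

lemma d_zero : C.d 0 = 0 :=
  (AddMonoidHom.mk' C.d C.d_add).map_zero

variable {C}

lemma iota_eq_of_pairMinus_eq_zero {r s : ℕ} {p q : X × F} (h : C.pairMinus r s p q = 0) :
    C.iota q.1 p.2 = ((-1:ℝ)^(r*s)) • C.iota p.1 q.2 :=
  sub_eq_zero.mp ((smul_eq_zero.mp h).resolve_left (by norm_num))

lemma courant_anticomm {r s : ℕ} (hr : 1 ≤ r) (hs : 1 ≤ s) {p q : X × F}
    (hp : p.1 ∈ C.MV r) (hq : q.1 ∈ C.MV s) :
    C.courant r s p q = -(((-1:ℝ)^((r-1)*(s-1))) • C.courant s r q p) := by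
  obtain ⟨k, rfl⟩ := Nat.exists_eq_add_of_le' hr
  obtain ⟨l, rfl⟩ := Nat.exists_eq_add_of_le' hs
  refine Prod.ext (C.sch_comm hp hq) ?_
  simp only [courant, lie, pairPlus, Nat.add_sub_cancel, Prod.snd_neg, Prod.smul_snd,
    smul_add, smul_sub, smul_smul, C.d_add, C.d_smul]
  rcases Nat.even_or_odd k with hk | hk <;> rcases Nat.even_or_odd l with hl | hl <;>
    · simp [parity_simps, hk, hl]
      module

lemma courant_wedgeP {r s t : ℕ} (hr : 1 ≤ r) (hs : 1 ≤ s) (ht : 1 ≤ t) {p q w : X × F}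
    (hp : p.1 ∈ C.MV r) (hq : q.1 ∈ C.MV s) (hw : w.1 ∈ C.MV t)
    (hpq : C.pairMinus r s p q = 0) (hpw : C.pairMinus r t p w = 0)
    (hqw : C.pairMinus s t q w = 0) :
    C.courant r (s + t) p (C.wedgeP s t q w) =
      C.wedgeP (r + s - 1) t (C.courant r s p q) w
        + ((-1:ℝ)^((r-1)*s)) • C.wedgeP s (r + t - 1) q (C.courant r t p w) := by
  obtain ⟨k, rfl⟩ := Nat.exists_eq_add_of_le' hr
  obtain ⟨l, rfl⟩ := Nat.exists_eq_add_of_le' hs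
  obtain ⟨m, rfl⟩ := Nat.exists_eq_add_of_le' ht
  refine Prod.ext (C.sch_leibniz hp hq hw) ?_
  -- The `iota_comm` and isotropy rewrites all push contractions by `p.1` outwards and those by
  -- `w.1` inwards, so together they terminate in a normal form.
  simp only [show k + 1 + (l + 1) - 1 = k + l + 1 by omega,
    show k + 1 + (m + 1) - 1 = k + m + 1 by omega,
    courant, lie, pairPlus, wedgeP, Nat.add_sub_cancel, Prod.snd_add, Prod.smul_snd,
    C.koszul hp hq, C.koszul hp hw, C.iota_wedge hq hw,
    C.iota_comm hw hq, C.iota_comm hq hp, C.iota_comm hw hp,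
    iota_eq_of_pairMinus_eq_zero hpq, iota_eq_of_pairMinus_eq_zero hpw,
    iota_eq_of_pairMinus_eq_zero hqw,
    smul_add, smul_sub, smul_smul, C.d_add, C.d_smul,
    C.iota_add_right, C.iota_real_smul, C.iota_sub_right]
  rcases Nat.even_or_odd k with hk | hk <;> rcases Nat.even_or_odd l with hl | hl <;>
    rcases Nat.even_or_odd m with hm | hm <;>
    · simp [parity_simps, hk, hl, hm]
      module

lemma jacobiator_fst {r s t : ℕ} (hr : 1 ≤ r) (hs : 1 ≤ s) (ht : 1 ≤ t) {p q w : X × F}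
    (hp : p.1 ∈ C.MV r) (hq : q.1 ∈ C.MV s) (hw : w.1 ∈ C.MV t) :
    (C.jacobiator r s t p q w).1 = 0 := by
  obtain ⟨k, rfl⟩ := Nat.exists_eq_add_of_le' hr
  obtain ⟨l, rfl⟩ := Nat.exists_eq_add_of_le' hs
  obtain ⟨m, rfl⟩ := Nat.exists_eq_add_of_le' ht
  have hjac := C.sch_jacobi hp hq hw
  simp only [Nat.add_sub_cancel] at hjac
  simp only [jacobiator, courant]
  linear_combination (norm := skip) ((-1:ℝ)^(k*m)) • hjac
  rcases Nat.even_or_odd k with hk | hk <;> rcases Nat.even_or_odd l with hl | hl <;>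
    rcases Nat.even_or_odd m with hm | hm <;>
    · simp [parity_simps, hk, hl, hm]
      module

lemma jacobiator_snd {r s t : ℕ} (hr : 1 ≤ r) (hs : 1 ≤ s) (ht : 1 ≤ t) {p q w : X × F}
    (hp : p.1 ∈ C.MV r) (hq : q.1 ∈ C.MV s) (hw : w.1 ∈ C.MV t)
    (hpq : C.pairMinus r s p q = 0) (hpw : C.pairMinus r t p w = 0) :
    (C.jacobiator r s t p q w).2 = -(((-1:ℝ)^(s+t) / 2) • C.d (C.TD r s t p q w)) := by
  obtain ⟨k, rfl⟩ := Nat.exists_eq_add_of_le' hr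
  obtain ⟨l, rfl⟩ := Nat.exists_eq_add_of_le' hs
  obtain ⟨m, rfl⟩ := Nat.exists_eq_add_of_le' ht
  simp only [show l + 1 + (m + 1) - 1 = l + m + 1 by omega,
    show k + 1 + (l + 1) - 1 = k + l + 1 by omega,
    show m + 1 + (k + 1) - 1 = m + k + 1 by omega,
    jacobiator, TD, courant, lie, pairPlus, pairMinus, Nat.add_sub_cancel,
    Prod.snd_add, Prod.smul_snd,
    C.koszul hq hw, C.koszul hp hq, C.koszul hw hp,
    C.iota_comm hw hq, C.iota_comm hq hp, C.iota_comm hw hp,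
    iota_eq_of_pairMinus_eq_zero hpq, iota_eq_of_pairMinus_eq_zero hpw,
    smul_add, smul_sub, smul_smul, C.d_add, C.d_smul, C.d_sub, C.d_d,
    C.iota_add_right, C.iota_real_smul, C.iota_sub_right, C.iota_zero_right]
  rcases Nat.even_or_odd k with hk | hk <;> rcases Nat.even_or_odd l with hl | hl <;>
    rcases Nat.even_or_odd m with hm | hm <;>
    · simp [parity_simps, hk, hl, hm]
      module

lemma jacobiator_eq_zero_of_TD_eq_zero {r s t : ℕ} (hr : 1 ≤ r) (hs : 1 ≤ s) (ht : 1 ≤ t)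
    {p q w : X × F} (hp : p.1 ∈ C.MV r) (hq : q.1 ∈ C.MV s) (hw : w.1 ∈ C.MV t)
    (hpq : C.pairMinus r s p q = 0) (hpw : C.pairMinus r t p w = 0)
    (hTD : C.TD r s t p q w = 0) :
    C.jacobiator r s t p q w = 0 := by
  refine Prod.ext (jacobiator_fst hr hs ht hp hq hw) ?_
  rw [jacobiator_snd hr hs ht hp hq hw hpq hpw, hTD, C.d_zero, smul_zero, neg_zero, Prod.snd_zero]

namespace IsMultiDirac

variable {n : ℕ} {D : ℕ → Set (X × F)}

lemma fst_mem (hD : C.IsMultiDirac n D) {r : ℕ} (hr : 1 ≤ r) (hrn : r ≤ n) {p : X × F}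
    (hp : p ∈ D r) : p.1 ∈ C.MV r :=
  (hD.subset r hr hrn hp).1

lemma pairMinus_eq_zero (hD : C.IsMultiDirac n D) {r s : ℕ} (hr : 1 ≤ r) (hs : 1 ≤ s)
    (hrs : r + s ≤ n + 1) {p q : X × F} (hp : p ∈ D r) (hq : q ∈ D s) :
    C.pairMinus r s p q = 0 := by
  rw [← hD.orth r s hr hs hrs] at hq
  exact hq.2 p hp

lemma TD_eq_zero (hD : C.IsMultiDirac n D) (hInt : C.Integrable n D) {r s t : ℕ}
    (hr : 1 ≤ r) (hs : 1 ≤ s) (ht : 1 ≤ t) (hrst : r + s + t ≤ n + 1) {p q w : X × F}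
    (hp : p ∈ D r) (hq : q ∈ D s) (hw : w ∈ D t) :
    C.TD r s t p q w = 0 := by
  have hqw : C.courant s t q w ∈ D (s + t - 1) := hInt s t hs ht (by omega) q hq w hw
  rw [TD, hD.pairMinus_eq_zero hr (by omega) (by omega) hp hqw, smul_zero]

end IsMultiDirac

end MultiCalc

/-- The space of sections of an integrable multi-Dirac structure forms a
Gerstenhaber algebra: the multi-Courant bracket is graded anticommutative,
satisfies the graded Leibniz identity with respect to the wedge product, and
satisfies the graded Jacobi identity. -/
theorem multiDirac_gerstenhaber {A X F : Type} [CommRing A] [Algebra ℝ A]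
    [AddCommGroup X] [AddCommGroup F] [Module ℝ X] [Module ℝ F]
    [Module A X] [Module A F] [IsScalarTower ℝ A X] [IsScalarTower ℝ A F]
    (C : MultiCalc A X F)
    (n : ℕ) (D : ℕ → Set (X × F)) (hD : C.IsMultiDirac n D)
    (hInt : C.Integrable n D)
    (r s t : ℕ) (hr : 1 ≤ r) (hs : 1 ≤ s) (ht : 1 ≤ t)
    (hsum : r + s + t ≤ n + 1)
    (p q w : X × F) (hp : p ∈ D r) (hq : q ∈ D s) (hw : w ∈ D t) :
    C.courant r s p q = -(((-1:ℝ)^((r-1)*(s-1))) • C.courant s r q p) ∧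
      C.courant r (s + t) p (C.wedgeP s t q w) =
        C.wedgeP (r + s - 1) t (C.courant r s p q) w
          + ((-1:ℝ)^((r-1)*s)) • C.wedgeP s (r + t - 1) q (C.courant r t p w) ∧
      C.jacobiator r s t p q w = 0 := by
  have hp₁ := hD.fst_mem hr (by omega) hp
  have hq₁ := hD.fst_mem hs (by omega) hq
  have hw₁ := hD.fst_mem ht (by omega) hw
  have hpq := hD.pairMinus_eq_zero hr hs (by omega) hp hq
  have hpw := hD.pairMinus_eq_zero hr ht (by omega) hp hw
  have hqw := hD.pairMinus_eq_zero hs ht (by omega) hq hw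
  exact ⟨MultiCalc.courant_anticomm hr hs hp₁ hq₁,
    MultiCalc.courant_wedgeP hr hs ht hp₁ hq₁ hw₁ hpq hpw hqw,
    MultiCalc.jacobiator_eq_zero_of_TD_eq_zero hr hs ht hp₁ hq₁ hw₁ hpq hpw
      (hD.TD_eq_zero hInt hr hs ht hsum hp hq hw)⟩
end
end

section
/- For an (n+1)-form Ω on a manifold Z, the graph D_r := {(Γ, i_Γ Ω) : Γ ∈ ⋀^r(TZ)} ⊂ L_r, r = 1,…,n, satisfies the maximally isotropic property (D_r)^{⊥,s} = D_s for all r+s ≤ n+1; hence D = D_1 ⊕ ⋯ ⊕ D_n is a multi-Dirac structure of degree n. -/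
/-!
The graph of `Ω` is isotropic because contractions graded-commute:
`i_{Γ'} i_Γ Ω = (-1)^{rs} i_Γ i_{Γ'} Ω`. Conversely, if `(Γ', Σ') ∈ L_s` is orthogonal to
every `(Γ, i_Γ Ω)` with `Γ` of degree `r`, the same identity gives `i_Γ (Σ' - i_{Γ'} Ω) = 0`
for all such `Γ`; as `r ≤ n + 1 - s`, the degree of `Σ' - i_{Γ'} Ω`, nondegeneracy of the
contraction forces `Σ' = i_{Γ'} Ω`.
-/

noncomputable section

namespace MultiCalc

variable {A X F : Type} [CommRing A] [Algebra ℝ A]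
  [AddCommGroup X] [AddCommGroup F] [Module ℝ X] [Module ℝ F]
  [Module A X] [Module A F] [IsScalarTower ℝ A X] [IsScalarTower ℝ A F]
variable (C : MultiCalc A X F)

lemma pairMinus_eq_zero_iff (r s : ℕ) (p q : X × F) :
    C.pairMinus r s p q = 0 ↔ C.iota q.1 p.2 = ((-1 : ℝ) ^ (r * s)) • C.iota p.1 q.2 := by
  rw [pairMinus, smul_eq_zero_iff_right (by norm_num), sub_eq_zero]

lemma pairMinus_graphD_eq_zero {r s : ℕ} {a b : X} (ha : a ∈ C.MV r) (hb : b ∈ C.MV s)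
    (Ω : F) : C.pairMinus r s (a, C.iota a Ω) (b, C.iota b Ω) = 0 := by
  rw [pairMinus_eq_zero_iff, C.iota_comm hb ha, mul_comm]

lemma graphD_subset_Lset {n : ℕ} {Ω : F} (hΩ : Ω ∈ C.Fm (n + 1)) (r : ℕ) :
    C.graphD Ω r ⊆ C.Lset n r :=
  fun _ ⟨ha, hα⟩ => ⟨ha, hα ▸ C.iota_mem ha hΩ⟩

lemma eq_iota_of_forall_pairMinus_graphD_eq_zero {n r s : ℕ} {Ω : F} (hΩ : Ω ∈ C.Fm (n + 1))
    (hr : 1 ≤ r) (hrs : r + s ≤ n + 1) {b : X} {β : F} (hb : b ∈ C.MV s)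
    (hβ : β ∈ C.Fm (n + 1 - s))
    (horth : ∀ a ∈ C.MV r, C.pairMinus r s (a, C.iota a Ω) (b, β) = 0) :
    β = C.iota b Ω := by
  rw [← sub_eq_zero]
  refine C.iota_nondeg (Submodule.sub_mem _ hβ (C.iota_mem hb hΩ)) hr (by omega) fun a ha => ?_
  have hcomm :
      ((-1 : ℝ) ^ (r * s)) • C.iota a β = ((-1 : ℝ) ^ (r * s)) • C.iota a (C.iota b Ω) := by
    rw [← (C.pairMinus_eq_zero_iff r s _ _).mp (horth a ha), C.iota_comm hb ha, mul_comm]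
  rw [C.iota_sub_right, smul_right_injective F (pow_ne_zero _ (by norm_num)) hcomm, sub_self]

theorem orthC_graphD {n r s : ℕ} {Ω : F} (hΩ : Ω ∈ C.Fm (n + 1)) (hr : 1 ≤ r)
    (hrs : r + s ≤ n + 1) : C.orthC n r (C.graphD Ω r) s = C.graphD Ω s := by
  ext ⟨b, β⟩
  constructor
  · rintro ⟨⟨hb, hβ⟩, horth⟩
    exact ⟨hb, C.eq_iota_of_forall_pairMinus_graphD_eq_zero hΩ hr hrs hb hβ
      fun a ha => horth _ ⟨ha, rfl⟩⟩
  · rintro ⟨hb, hβ : β = C.iota b Ω⟩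
    subst hβ
    refine ⟨C.graphD_subset_Lset hΩ s ⟨hb, rfl⟩, ?_⟩
    rintro ⟨a, α⟩ ⟨ha, hα : α = C.iota a Ω⟩
    subst hα
    exact C.pairMinus_graphD_eq_zero ha hb Ω

end MultiCalc

/-- The graph `D_r = {(Γ, i_Γ Ω)}` of an `(n+1)`-form `Ω` satisfies the
maximally isotropic property `(D_r)^{⊥,s} = D_s` for `r + s ≤ n + 1`, hence
is a multi-Dirac structure of degree `n`. -/
theorem graph_isMultiDirac {A X F : Type} [CommRing A] [Algebra ℝ A]
    [AddCommGroup X] [AddCommGroup F] [Module ℝ X] [Module ℝ F]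
    [Module A X] [Module A F] [IsScalarTower ℝ A X] [IsScalarTower ℝ A F]
    (C : MultiCalc A X F)
    (n : ℕ) (Ω : F) (hΩ : Ω ∈ C.Fm (n + 1)) :
    (∀ r s, 1 ≤ r → 1 ≤ s → r + s ≤ n + 1 →
        C.orthC n r (C.graphD Ω r) s = C.graphD Ω s) ∧
      C.IsMultiDirac n (C.graphD Ω) := by
  have orth : ∀ r s, 1 ≤ r → 1 ≤ s → r + s ≤ n + 1 →
      C.orthC n r (C.graphD Ω r) s = C.graphD Ω s :=
    fun _ _ hr _ hrs => C.orthC_graphD hΩ hr hrs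
  exact ⟨orth, ⟨fun r _ _ => C.graphD_subset_Lset hΩ r, orth⟩⟩
end
end
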